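/- arXiv:1811.03591 — 5 statements merged into one kernel-verified Lean document; each statement's English description precedes it below -/
import Mathlib

section
/- Let X ⊆ ℝ^n and let f : X → ℝ^m be a bi-Lipschitz map with distortion at most D. Then there exists an outer extension f' : ℝ^n → ℝ^{n+m} of f (i.e., f'(x) = (f(x), 0, …, 0) for every x ∈ X) whose distortion is at most 3D. -/
/-!
Let `λ` be the scale of `f`. By Kirszbraun's theorem `f` extends to a `λD`-Lipschitz map
`φ : ℝⁿ → ℝᵐ`, and `f⁻¹ : f(X) → X` extends to a `λ⁻¹`-Lipschitz map `ψ : ℝᵐ → ℝⁿ`. The map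
`x ↦ (φ x, (λ/√2) (x - ψ (φ x)))` equals `(f x, 0)` on `X`, since `ψ ∘ φ = id` there. Writing
`h = id - ψ ∘ φ`, the triangle inequality gives `|‖x - y‖ - ‖h x - h y‖| ≤ ‖φ x - φ y‖ / λ`:
the second component supplies the lower bound that `φ` alone lacks, and costs at most a factor
`1 + D ≤ 2D` in the upper bound; Cauchy–Schwarz then gives distortion `3D` at scale `λ/√3`.

Kirszbraun's theorem is proved as usual: by Zorn's lemma and compactness of balls it suffices to
extend a finite `K`-Lipschitz correspondence `{(aᵢ, bᵢ)}` to one new point `x`. A minimiser `y`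
of `maxᵢ ‖y - bᵢ‖ / ‖x - aᵢ‖` lies in the convex hull of the `bᵢ` attaining the maximum (else
moving `y` towards them lowers it), and for `y = ∑ wᵢ bᵢ` the identity
`∑ᵢ wᵢ ‖y - bᵢ‖² = ½ ∑ᵢⱼ wᵢ wⱼ ‖bᵢ - bⱼ‖²`, compared with the same sum for the `aᵢ` around `x`,
shows that some attained ratio is at most `K`.
-/

/-- `f` restricted to `A` has distortion at most `D`: there is a scale `lam > 0` with
`lam * ‖x - y‖ ≤ ‖f x - f y‖ ≤ lam * D * ‖x - y‖` for all `x, y ∈ A`. -/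
def HasDistortionAtMost {n m : ℕ} (A : Set (EuclideanSpace ℝ (Fin n)))
    (f : EuclideanSpace ℝ (Fin n) → EuclideanSpace ℝ (Fin m)) (D : ℝ) : Prop :=
  ∃ lam > (0 : ℝ), ∀ x ∈ A, ∀ y ∈ A,
    lam * ‖x - y‖ ≤ ‖f x - f y‖ ∧ ‖f x - f y‖ ≤ lam * D * ‖x - y‖

open Finset Filter Topology

theorem exists_forall_sup'_norm_sub_div_le {F ι : Type*} [NormedAddCommGroup F] [ProperSpace F]
    {s : Finset ι} (hs : s.Nonempty) (b : ι → F) {r : ι → ℝ} (hr : ∀ i ∈ s, 0 < r i) :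
    ∃ y, ∀ z, s.sup' hs (fun i => ‖y - b i‖ / r i) ≤ s.sup' hs (fun i => ‖z - b i‖ / r i) := by
  obtain ⟨i, hi⟩ := id hs
  refine (Continuous.finset_sup'_apply hs fun j _ => by fun_prop).exists_forall_le ?_
  have hfar : Tendsto (fun z => (‖z‖ - ‖b i‖) / r i) (cocompact F) atTop :=
    (tendsto_atTop_add_const_right _ _ tendsto_norm_cocompact_atTop).atTop_div_const (hr i hi)
  refine tendsto_atTop_mono (fun z => ?_) hfar
  exact (div_le_div_of_nonneg_right (norm_sub_norm_le z (b i)) (hr i hi).le).trans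
    (le_sup' (fun j => ‖z - b j‖ / r j) hi)

section Kirszbraun

variable {E F : Type*} [NormedAddCommGroup E] [InnerProductSpace ℝ E]
  [NormedAddCommGroup F] [InnerProductSpace ℝ F]

theorem sum_sum_mul_norm_sub_sq {ι : Type*} (s : Finset ι) (w : ι → ℝ) (v : ι → F)
    (hw : ∑ i ∈ s, w i = 1) :
    ∑ i ∈ s, ∑ j ∈ s, w i * w j * ‖v i - v j‖ ^ 2
      = 2 * ∑ i ∈ s, w i * ‖v i‖ ^ 2 - 2 * ‖∑ i ∈ s, w i • v i‖ ^ 2 := by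
  have hmean : ‖∑ i ∈ s, w i • v i‖ ^ 2
      = ∑ i ∈ s, ∑ j ∈ s, w i * w j * inner ℝ (v i) (v j) := by
    simp only [← real_inner_self_eq_norm_sq, sum_inner, inner_sum, real_inner_smul_left,
      real_inner_smul_right]
    exact sum_congr rfl fun _ _ => sum_congr rfl fun _ _ => by rw [real_inner_comm]; ring
  calc ∑ i ∈ s, ∑ j ∈ s, w i * w j * ‖v i - v j‖ ^ 2
      = ∑ i ∈ s, ∑ j ∈ s, (w i * ‖v i‖ ^ 2 * w j + w j * ‖v j‖ ^ 2 * w i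
          - 2 * (w i * w j * inner ℝ (v i) (v j))) :=
        sum_congr rfl fun _ _ => sum_congr rfl fun _ _ => by rw [norm_sub_sq_real]; ring
    _ = _ := by
      simp only [sum_sub_distrib, sum_add_distrib, ← mul_sum, ← sum_mul, hw, hmean]
      ring

theorem sum_mul_norm_sum_smul_sub_sq_le {ι : Type*} {s : Finset ι} {w : ι → ℝ} {a : ι → E}
    {b : ι → F} {K : ℝ} (hab : ∀ i ∈ s, ∀ j ∈ s, ‖b i - b j‖ ≤ K * ‖a i - a j‖)
    (hw₀ : ∀ i ∈ s, 0 ≤ w i) (hw₁ : ∑ i ∈ s, w i = 1) (x : E) :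
    ∑ i ∈ s, w i * ‖∑ j ∈ s, w j • b j - b i‖ ^ 2 ≤ K ^ 2 * ∑ i ∈ s, w i * ‖x - a i‖ ^ 2 := by
  set y := ∑ j ∈ s, w j • b j
  have hy : ∑ i ∈ s, w i • (y - b i) = 0 := by
    simp only [smul_sub, sum_sub_distrib, ← sum_smul, hw₁, one_smul, sub_self, y]
  have hb := sum_sum_mul_norm_sub_sq s w (fun i => y - b i) hw₁
  have ha := sum_sum_mul_norm_sub_sq s w (fun i => x - a i) hw₁
  simp only [hy, norm_zero, sub_sub_sub_cancel_left] at hb ha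
  have hcomp : ∑ i ∈ s, ∑ j ∈ s, w i * w j * ‖b j - b i‖ ^ 2
      ≤ K ^ 2 * ∑ i ∈ s, ∑ j ∈ s, w i * w j * ‖a j - a i‖ ^ 2 := by
    simp only [mul_sum]
    refine sum_le_sum fun i hi => sum_le_sum fun j hj => ?_
    have hsq : ‖b j - b i‖ ^ 2 ≤ K ^ 2 * ‖a j - a i‖ ^ 2 := by
      rw [← mul_pow]; exact pow_le_pow_left₀ (norm_nonneg _) (hab j hj i hi) 2
    nlinarith [mul_nonneg (hw₀ i hi) (hw₀ j hj)]
  nlinarith [norm_nonneg (∑ i ∈ s, w i • (x - a i)), sq_nonneg K]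

theorem exists_norm_sub_le_mul_of_mem_convexHull {T : Finset (E × F)} {K : ℝ} (hK : 0 ≤ K)
    (hT : ∀ p ∈ T, ∀ q ∈ T, ‖p.2 - q.2‖ ≤ K * ‖p.1 - q.1‖) (x : E) {y : F}
    (hy : y ∈ convexHull ℝ (Prod.snd '' (T : Set (E × F)))) :
    ∃ p ∈ T, ‖y - p.2‖ ≤ K * ‖x - p.1‖ := by
  rw [← LinearMap.coe_snd (R := ℝ) (M := E) (M₂ := F), ← LinearMap.image_convexHull] at hy
  obtain ⟨q, hq, rfl⟩ := hy
  obtain ⟨w, hw₀, hw₁, rfl⟩ := Finset.mem_convexHull'.mp hq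
  simp only [LinearMap.coe_snd, Prod.snd_sum, Prod.smul_snd]
  have hvar := sum_mul_norm_sum_smul_sub_sq_le (a := Prod.fst) (b := Prod.snd) hT hw₀ hw₁ x
  by_contra! hfar
  have hlt : ∑ p ∈ T, w p * (K * ‖x - p.1‖) ^ 2
      < ∑ p ∈ T, w p * ‖∑ q ∈ T, w q • q.2 - p.2‖ ^ 2 := by
    obtain ⟨p, hp, hwp⟩ := exists_lt_of_sum_lt (by simp [hw₁] : ∑ p ∈ T, (0 : ℝ) < ∑ p ∈ T, w p)
    refine sum_lt_sum (fun p hp => ?_) ⟨p, hp, ?_⟩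
    · exact mul_le_mul_of_nonneg_left
        (pow_le_pow_left₀ (by positivity) (hfar p hp).le 2) (hw₀ p hp)
    · exact mul_lt_mul_of_pos_left
        (pow_lt_pow_left₀ (hfar p hp) (by positivity) two_ne_zero) hwp
  simp only [mul_pow, mul_sum, mul_left_comm (w _)] at hvar hlt
  linarith

theorem exists_inner_pos_of_notMem_convexHull [CompleteSpace F] {J : Set F} (hJ : J.Finite)
    {y : F} (hy : y ∉ convexHull ℝ J) : ∃ v : F, ∀ z ∈ J, 0 < inner ℝ v (z - y) := by
  obtain ⟨ℓ, u, hyu, hu⟩ := geometric_hahn_banach_point_closed (convex_convexHull ℝ J)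
    (hJ.isCompact_convexHull (𝕜 := ℝ)).isClosed hy
  refine ⟨(InnerProductSpace.toDual ℝ F).symm ℓ, fun z hz => ?_⟩
  rw [inner_sub_right, InnerProductSpace.toDual_symm_apply, InnerProductSpace.toDual_symm_apply]
  linarith [hu z (subset_convexHull ℝ J hz)]

theorem eventually_norm_add_smul_sub_lt {v y z : F} (hv : 0 < inner ℝ v (z - y)) :
    ∀ᶠ t in 𝓝[>] (0 : ℝ), ‖y + t • v - z‖ < ‖y - z‖ := by
  have hε : 0 < 2 * inner ℝ v (z - y) / (‖v‖ ^ 2 + 1) := by positivity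
  filter_upwards [Ioo_mem_nhdsGT hε] with t ⟨ht₀, ht⟩
  rw [lt_div_iff₀ (by positivity)] at ht
  have hexp : ‖y + t • v - z‖ ^ 2
      = ‖y - z‖ ^ 2 - 2 * t * inner ℝ v (z - y) + t ^ 2 * ‖v‖ ^ 2 := by
    rw [add_sub_right_comm, norm_add_sq_real, real_inner_smul_right, norm_smul,
      Real.norm_of_nonneg ht₀.le, ← neg_sub z y, inner_neg_left, real_inner_comm]
    ring
  refine (pow_lt_pow_iff_left₀ (norm_nonneg _) (norm_nonneg _) two_ne_zero).mp ?_
  rw [hexp]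
  nlinarith

theorem mem_convexHull_of_forall_sup'_le [CompleteSpace F] {ι : Type*} {s : Finset ι}
    (hs : s.Nonempty) (b : ι → F) {r : ι → ℝ} (hr : ∀ i ∈ s, 0 < r i) {y : F}
    (hy : ∀ z, s.sup' hs (fun i => ‖y - b i‖ / r i) ≤ s.sup' hs (fun i => ‖z - b i‖ / r i)) :
    y ∈ convexHull ℝ
      (b '' ↑{i ∈ s | ‖y - b i‖ / r i = s.sup' hs (fun i => ‖y - b i‖ / r i)}) := by
  set φ := s.sup' hs (fun i => ‖y - b i‖ / r i)
  by_contra hy'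
  obtain ⟨v, hv⟩ := exists_inner_pos_of_notMem_convexHull ((finite_toSet _).image b) hy'
  have hdecr : ∀ i ∈ s, ∀ᶠ t in 𝓝[>] (0 : ℝ), ‖y + t • v - b i‖ / r i < φ := by
    intro i hi
    by_cases hact : ‖y - b i‖ / r i = φ
    · have hvi := hv (b i) ⟨i, mem_filter.2 ⟨hi, hact⟩, rfl⟩
      filter_upwards [eventually_norm_add_smul_sub_lt hvi] with t ht
      rw [← hact]
      exact div_lt_div_of_pos_right ht (hr i hi)
    · have hlt : ‖y - b i‖ / r i < φ := (le_sup' (fun j => ‖y - b j‖ / r j) hi).lt_of_ne hact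
      refine nhdsWithin_le_nhds (ContinuousAt.eventually_lt (by fun_prop) continuousAt_const ?_)
      simpa using hlt
  obtain ⟨t, ht⟩ := ((eventually_all_finset s).2 hdecr).exists
  exact (hy (y + t • v)).not_gt ((sup'_lt_iff _).2 ht)

theorem exists_norm_sub_le_mul_of_finset [ProperSpace F] {K : ℝ} (hK : 0 ≤ K)
    (s : Finset (E × F)) (hs : ∀ p ∈ s, ∀ q ∈ s, ‖p.2 - q.2‖ ≤ K * ‖p.1 - q.1‖) (x : E) :
    ∃ y : F, ∀ p ∈ s, ‖y - p.2‖ ≤ K * ‖x - p.1‖ := by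
  rcases s.eq_empty_or_nonempty with rfl | hne
  · exact ⟨0, by simp⟩
  by_cases hx : ∃ p ∈ s, p.1 = x
  · obtain ⟨p, hp, rfl⟩ := hx
    exact ⟨p.2, fun q hq => hs p hp q hq⟩
  push Not at hx
  have hr : ∀ p ∈ s, 0 < ‖x - p.1‖ := fun p hp => norm_pos_iff.2 (sub_ne_zero.2 (hx p hp).symm)
  obtain ⟨y, hy⟩ := exists_forall_sup'_norm_sub_div_le hne Prod.snd hr
  refine ⟨y, fun p hp => (div_le_iff₀ (hr p hp)).1
    ((le_sup' (fun q => ‖y - q.2‖ / ‖x - q.1‖) hp).trans ?_)⟩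
  by_contra! hKlt
  obtain ⟨q, hq, hqK⟩ := exists_norm_sub_le_mul_of_mem_convexHull hK
    (fun p hp q hq => hs p (mem_filter.1 hp).1 q (mem_filter.1 hq).1) x
    (mem_convexHull_of_forall_sup'_le hne Prod.snd hr hy)
  obtain ⟨hq, hqφ⟩ := mem_filter.1 hq
  rw [div_eq_iff (hr q hq).ne'] at hqφ
  nlinarith [hr q hq]

theorem exists_norm_sub_le_mul [ProperSpace F] {K : ℝ} (hK : 0 ≤ K) (s : Set (E × F))
    (hs : ∀ p ∈ s, ∀ q ∈ s, ‖p.2 - q.2‖ ≤ K * ‖p.1 - q.1‖) (x : E) :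
    ∃ y : F, ∀ p ∈ s, ‖y - p.2‖ ≤ K * ‖x - p.1‖ := by
  classical
  rcases s.eq_empty_or_nonempty with rfl | ⟨p₀, hp₀⟩
  · exact ⟨0, by simp⟩
  have hfin : ∀ u : Finset s, (Metric.closedBall p₀.2 (K * ‖x - p₀.1‖) ∩
      ⋂ p ∈ u, Metric.closedBall (p : E × F).2 (K * ‖x - (p : E × F).1‖)).Nonempty := by
    intro u
    have hsub : ∀ p ∈ insert p₀ (u.map (Function.Embedding.subtype _)), p ∈ s := by
      simp only [mem_insert, Finset.mem_map, Function.Embedding.coe_subtype]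
      rintro p (rfl | ⟨q, -, rfl⟩)
      exacts [hp₀, q.2]
    obtain ⟨y, hy⟩ := exists_norm_sub_le_mul_of_finset hK _
      (fun p hp q hq => hs p (hsub p hp) q (hsub q hq)) x
    refine ⟨y, mem_closedBall_iff_norm.2 (hy _ (mem_insert_self _ _)), Set.mem_iInter₂.2 ?_⟩
    exact fun p hp => mem_closedBall_iff_norm.2 (hy _ (mem_insert_of_mem (mem_map_of_mem _ hp)))
  obtain ⟨y, -, hy⟩ := (isCompact_closedBall _ _).inter_iInter_nonempty _
    (fun _ => Metric.isClosed_closedBall) hfin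
  exact ⟨y, fun p hp => mem_closedBall_iff_norm.1 (Set.mem_iInter.1 hy ⟨p, hp⟩)⟩

theorem exists_extension_norm_sub_le_mul [ProperSpace F] {K : ℝ} (hK : 0 ≤ K)
    (s : Set (E × F)) (hs : ∀ p ∈ s, ∀ q ∈ s, ‖p.2 - q.2‖ ≤ K * ‖p.1 - q.1‖) :
    ∃ g : E → F, (∀ p ∈ s, g p.1 = p.2) ∧ ∀ x y, ‖g x - g y‖ ≤ K * ‖x - y‖ := by
  let lip : Set (Set (E × F)) := {t | ∀ p ∈ t, ∀ q ∈ t, ‖p.2 - q.2‖ ≤ K * ‖p.1 - q.1‖}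
  obtain ⟨M, hsM, hMmax⟩ := zorn_subset_nonempty lip (fun c hc hchain _ => by
    refine ⟨⋃₀ c, ?_, fun t => Set.subset_sUnion_of_mem⟩
    rintro p ⟨t, htc, hpt⟩ q ⟨t', ht'c, hqt'⟩
    rcases hchain.total htc ht'c with h | h
    exacts [hc ht'c p (h hpt) q hqt', hc htc p hpt q (h hqt')]) s hs
  have hM : M ∈ lip := hMmax.prop
  have htotal : ∀ x, ∃ y, (x, y) ∈ M := by
    intro x
    obtain ⟨y, hy⟩ := exists_norm_sub_le_mul hK M hM x
    refine ⟨y, hMmax.mem_of_prop_insert ?_⟩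
    rintro p (rfl | hp) q (rfl | hq)
    · simp
    · exact hy q hq
    · rw [norm_sub_rev, norm_sub_rev p.1]; exact hy p hp
    · exact hM p hp q hq
  choose g hg using htotal
  refine ⟨g, fun p hp => ?_, fun x y => hM _ (hg x) _ (hg y)⟩
  simpa [sub_eq_zero] using hM _ (hg p.1) p (hsM hp)

end Kirszbraun

noncomputable def concatVec {n m : ℕ} (a : EuclideanSpace ℝ (Fin m))
    (b : EuclideanSpace ℝ (Fin n)) : EuclideanSpace ℝ (Fin (n + m)) :=
  WithLp.toLp 2 fun j => if h : (j : ℕ) < m then a ⟨j, h⟩ else b ⟨j - m, by omega⟩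

theorem concatVec_sub {n m : ℕ} (a a' : EuclideanSpace ℝ (Fin m))
    (b b' : EuclideanSpace ℝ (Fin n)) :
    concatVec a b - concatVec a' b' = concatVec (a - a') (b - b') := by
  ext j
  simp only [concatVec, PiLp.sub_apply]
  split_ifs <;> rfl

theorem norm_concatVec_sq {n m : ℕ} (a : EuclideanSpace ℝ (Fin m))
    (b : EuclideanSpace ℝ (Fin n)) : ‖concatVec a b‖ ^ 2 = ‖a‖ ^ 2 + ‖b‖ ^ 2 := by
  simp only [EuclideanSpace.real_norm_sq_eq]
  rw [← (finCongr (Nat.add_comm m n)).sum_comp, Fin.sum_univ_add]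
  simp [concatVec]

theorem distortion_bounds_of_abs_sub_le {l D d B H P : ℝ} (hl : 0 < l) (hD : 1 ≤ D) (hd : 0 ≤ d)
    (hH : 0 ≤ H) (hP₀ : 0 ≤ P) (hB : B ≤ l * D * d) (hdH : |d - H| ≤ B / l)
    (hP : P ^ 2 = B ^ 2 + l ^ 2 / 2 * H ^ 2) :
    l / √3 * d ≤ P ∧ P ≤ l / √3 * (3 * D) * d := by
  obtain ⟨t, ht, rfl⟩ : ∃ t, 0 ≤ t ∧ B = l * t :=
    ⟨B / l, (abs_nonneg _).trans hdH, by field_simp⟩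
  rw [mul_div_cancel_left₀ _ hl.ne', abs_le] at hdH
  have htD : t ≤ D * d := by nlinarith
  have h3 : √3 ^ 2 = 3 := Real.sq_sqrt (by norm_num)
  constructor
  · refine (pow_le_pow_iff_left₀ (by positivity) hP₀ two_ne_zero).1 ?_
    rw [hP, div_mul_eq_mul_div, div_pow, h3]
    nlinarith [sq_nonneg (H - 2 * t), pow_le_pow_left₀ hd (by linarith : d ≤ H + t) 2]
  · refine (pow_le_pow_iff_left₀ hP₀ (by positivity) two_ne_zero).1 ?_
    have hlhs : (l / √3 * (3 * D) * d) ^ 2 = 3 * l ^ 2 * (D * d) ^ 2 := by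
      field_simp
      rw [h3]
    rw [hP, hlhs]
    have hH' : H ≤ 2 * (D * d) := by nlinarith
    nlinarith [mul_le_mul hH' hH' hH (by positivity), mul_le_mul htD htD ht (by positivity)]

/-- **Outer bi-Lipschitz extension theorem.** Every map `f : X → ℝᵐ`, `X ⊆ ℝⁿ`, of distortion
at most `D` admits an outer extension `f' : ℝⁿ → ℝⁿ⁺ᵐ` (i.e. `f' x = (f x, 0, …, 0)` for
`x ∈ X`) of distortion at most `3 * D`. -/
theorem outer_biLipschitz_extension {n m : ℕ} (X : Set (EuclideanSpace ℝ (Fin n)))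
    (f : EuclideanSpace ℝ (Fin n) → EuclideanSpace ℝ (Fin m)) (D : ℝ) (hD : 1 ≤ D)
    (hf : HasDistortionAtMost X f D) :
    ∃ f' : EuclideanSpace ℝ (Fin n) → EuclideanSpace ℝ (Fin (n + m)),
      (∀ x ∈ X, ∀ j : Fin (n + m),
        f' x j = if h : (j : ℕ) < m then f x ⟨j, h⟩ else 0) ∧
      HasDistortionAtMost Set.univ f' (3 * D) := by
  obtain ⟨l, hl, hf⟩ := hf
  obtain ⟨φ, hφX, hφ⟩ := exists_extension_norm_sub_le_mul (by positivity : 0 ≤ l * D)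
    ((fun x => (x, f x)) '' X) (by
      rintro _ ⟨x, hx, rfl⟩ _ ⟨y, hy, rfl⟩
      exact (hf x hx y hy).2)
  obtain ⟨ψ, hψX, hψ⟩ := exists_extension_norm_sub_le_mul (inv_nonneg.2 hl.le)
    ((fun x => (f x, x)) '' X) (by
      rintro _ ⟨x, hx, rfl⟩ _ ⟨y, hy, rfl⟩
      exact (le_inv_mul_iff₀ hl).2 (hf x hx y hy).1)
  refine ⟨fun x => concatVec (φ x) ((l / √2) • (x - ψ (φ x))), fun x hx j => ?_,
    l / √3, by positivity, fun x _ y _ => ?_⟩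
  · have hφx : φ x = f x := hφX _ ⟨x, hx, rfl⟩
    have hψx : ψ (f x) = x := hψX _ ⟨x, hx, rfl⟩
    simp [concatVec, hφx, hψx]
  have hψφ : |‖x - y‖ - ‖x - ψ (φ x) - (y - ψ (φ y))‖| ≤ ‖φ x - φ y‖ / l :=
    calc |‖x - y‖ - ‖x - ψ (φ x) - (y - ψ (φ y))‖|
        ≤ ‖x - y - (x - ψ (φ x) - (y - ψ (φ y)))‖ := abs_norm_sub_norm_le _ _
      _ = ‖ψ (φ x) - ψ (φ y)‖ := by congr 1; abel
      _ ≤ ‖φ x - φ y‖ / l := by rw [div_eq_inv_mul]; exact hψ _ _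
  refine distortion_bounds_of_abs_sub_le hl hD (norm_nonneg _) (norm_nonneg _) (norm_nonneg _)
    (hφ x y) hψφ ?_
  rw [concatVec_sub, norm_concatVec_sq, ← smul_sub, norm_smul, mul_pow,
    Real.norm_of_nonneg (by positivity), div_pow, Real.sq_sqrt (by norm_num)]
end

section
/- Let ε ∈ (0,1), let X ⊂ ℝ^n be a finite set containing 0, and let f : X → ℝ^m satisfy f(0) = 0 and ‖v − w‖² ≤ ‖f(v) − f(w)‖² ≤ (1 + 3ε)‖v − w‖² for all v, w ∈ X. Let u ∈ ℝ^n with ‖u‖ ≤ 1. Then there exists a vector u' ∈ ℝ^m such that (1) ‖u'‖ ≤ 1, and (2) |⟨u', f(v)⟩ − ⟨u, v⟩| ≤ 3√ε · (‖v‖² + 1) for every v ∈ X. -/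
open scoped RealInnerProductSpace

/-!
By Hahn–Banach separation in `ℝ^X`, a vector `u'` exists as soon as
`∑ μ_v ⟪u, v⟫ ≤ ‖∑ μ_v f v‖ + ∑ c_v |μ_v|` for all weights `μ`, where `c_v` is the allowed error.
Since `f` fixes `0`, the distortion bounds control the norms as well as the distances, so by
polarization the Gram matrices of `X` and `f X` differ entrywise by at most `3ε (‖v‖² + ‖w‖²)`.
Hence `‖∑ μ_v v‖² ≤ ‖∑ μ_v f v‖² + 6ε (∑ |μ_v|) (∑ |μ_v| ‖v‖²)`, and AM–GM turns the error
term into the square of `√(3ε) ∑ (‖v‖² + 1) |μ_v|`.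
-/
section

variable {E F : Type*} [NormedAddCommGroup E] [InnerProductSpace ℝ E]
  [NormedAddCommGroup F] [InnerProductSpace ℝ F]

theorem abs_inner_sub_inner_le_of_norm_sq_le {δ : ℝ} (hδ : 0 ≤ δ) {x y : E} {x' y' : F}
    (hx : ‖x‖ ^ 2 ≤ ‖x'‖ ^ 2 ∧ ‖x'‖ ^ 2 ≤ (1 + δ) * ‖x‖ ^ 2)
    (hy : ‖y‖ ^ 2 ≤ ‖y'‖ ^ 2 ∧ ‖y'‖ ^ 2 ≤ (1 + δ) * ‖y‖ ^ 2)
    (hxy : ‖x - y‖ ^ 2 ≤ ‖x' - y'‖ ^ 2 ∧ ‖x' - y'‖ ^ 2 ≤ (1 + δ) * ‖x - y‖ ^ 2) :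
    |⟪x', y'⟫ - ⟪x, y⟫| ≤ δ * (‖x‖ ^ 2 + ‖y‖ ^ 2) := by
  have hsub : ‖x - y‖ ^ 2 ≤ 2 * (‖x‖ ^ 2 + ‖y‖ ^ 2) := by
    nlinarith [norm_sub_sq_real x y, norm_add_sq_real x y, sq_nonneg ‖x + y‖]
  rw [abs_le]
  constructor <;> nlinarith [norm_sub_sq_real x y, norm_sub_sq_real x' y',
    mul_le_mul_of_nonneg_left hsub hδ, mul_nonneg hδ (sq_nonneg ‖x‖), mul_nonneg hδ (sq_nonneg ‖y‖)]

variable {ι : Type*} [Fintype ι]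

theorem norm_sum_smul_sq (μ : ι → ℝ) (x : ι → E) :
    ‖∑ i, μ i • x i‖ ^ 2 = ∑ i, ∑ j, μ i * μ j * ⟪x i, x j⟫ := by
  simp only [← real_inner_self_eq_norm_sq, sum_inner, inner_sum, real_inner_smul_left,
    real_inner_smul_right]
  exact Finset.sum_congr rfl fun i _ => Finset.sum_congr rfl fun j _ => by rw [real_inner_comm]; ring

theorem norm_sum_smul_sq_le_of_abs_inner_sub_inner_le {δ : ℝ} (x : ι → E) (y : ι → F)
    (h : ∀ i j, |⟪y i, y j⟫ - ⟪x i, x j⟫| ≤ δ * (‖x i‖ ^ 2 + ‖x j‖ ^ 2)) (μ : ι → ℝ) :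
    ‖∑ i, μ i • x i‖ ^ 2 ≤
      ‖∑ i, μ i • y i‖ ^ 2 + 2 * δ * (∑ i, |μ i|) * ∑ i, |μ i| * ‖x i‖ ^ 2 := by
  have hterm (i j : ι) : μ i * μ j * (⟪x i, x j⟫ - ⟪y i, y j⟫) ≤
      δ * (|μ i| * ‖x i‖ ^ 2 * |μ j|) + δ * (|μ i| * (|μ j| * ‖x j‖ ^ 2)) := calc
    _ ≤ |μ i| * |μ j| * |⟪y i, y j⟫ - ⟪x i, x j⟫| := by
      rw [← abs_mul, abs_sub_comm, ← abs_mul]; exact le_abs_self _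
    _ ≤ |μ i| * |μ j| * (δ * (‖x i‖ ^ 2 + ‖x j‖ ^ 2)) := by gcongr; exact h i j
    _ = _ := by ring
  calc ‖∑ i, μ i • x i‖ ^ 2
      = ‖∑ i, μ i • y i‖ ^ 2 + ∑ i, ∑ j, μ i * μ j * (⟪x i, x j⟫ - ⟪y i, y j⟫) := by
        simp only [norm_sum_smul_sq, mul_sub, Finset.sum_sub_distrib]; ring
    _ ≤ ‖∑ i, μ i • y i‖ ^ 2 + ∑ i, ∑ j,
          (δ * (|μ i| * ‖x i‖ ^ 2 * |μ j|) + δ * (|μ i| * (|μ j| * ‖x j‖ ^ 2))) := by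
        gcongr with i _ j _; exact hterm i j
    _ = _ := by
        simp only [Finset.sum_add_distrib, ← Finset.mul_sum, ← Finset.sum_mul]; ring

theorem sum_mul_inner_le_of_abs_inner_sub_inner_le {δ : ℝ} (hδ : 0 ≤ δ) (x : ι → E) (y : ι → F)
    (h : ∀ i j, |⟪y i, y j⟫ - ⟪x i, x j⟫| ≤ δ * (‖x i‖ ^ 2 + ‖x j‖ ^ 2)) {u : E} (hu : ‖u‖ ≤ 1)
    (μ : ι → ℝ) :
    ∑ i, μ i * ⟪u, x i⟫ ≤ ‖∑ i, μ i • y i‖ + ∑ i, √δ * (‖x i‖ ^ 2 + 1) * |μ i| := by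
  set S₀ := ∑ i, |μ i|
  set S₂ := ∑ i, |μ i| * ‖x i‖ ^ 2
  have hS₀ : 0 ≤ S₀ := by positivity
  have hS₂ : 0 ≤ S₂ := by positivity
  have hu_le : ∑ i, μ i * ⟪u, x i⟫ ≤ ‖∑ i, μ i • x i‖ := calc
    _ = ⟪u, ∑ i, μ i • x i⟫ := by simp only [inner_sum, real_inner_smul_right]
    _ ≤ ‖u‖ * ‖∑ i, μ i • x i‖ := real_inner_le_norm _ _
    _ ≤ _ := mul_le_of_le_one_left (norm_nonneg _) hu
  have hR : ∑ i, √δ * (‖x i‖ ^ 2 + 1) * |μ i| = √δ * (S₂ + S₀) := by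
    simp only [Finset.mul_sum, S₀, S₂, ← Finset.sum_add_distrib]
    exact Finset.sum_congr rfl fun i _ => by ring
  have hsq : ‖∑ i, μ i • x i‖ ^ 2 ≤ (‖∑ i, μ i • y i‖ + √δ * (S₂ + S₀)) ^ 2 := by
    have := norm_sum_smul_sq_le_of_abs_inner_sub_inner_le x y h μ
    have hR_sq : (√δ * (S₂ + S₀)) ^ 2 = δ * (S₂ + S₀) ^ 2 := by rw [mul_pow, Real.sq_sqrt hδ]
    nlinarith [mul_nonneg (norm_nonneg (∑ i, μ i • y i)) (by positivity : 0 ≤ √δ * (S₂ + S₀)),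
      mul_nonneg hδ (sq_nonneg S₀), mul_nonneg hδ (sq_nonneg S₂)]
  rw [hR]
  exact hu_le.trans (pow_le_pow_iff_left₀ (norm_nonneg _) (by positivity) two_ne_zero |>.1 hsq)

theorem exists_norm_le_one_forall_abs_inner_sub_le [ProperSpace F] (φ : ι → F) (b c : ι → ℝ)
    (hc : ∀ i, 0 ≤ c i) (h : ∀ μ : ι → ℝ, ∑ i, μ i * b i ≤ ‖∑ i, μ i • φ i‖ + ∑ i, c i * |μ i|) :
    ∃ x : F, ‖x‖ ≤ 1 ∧ ∀ i, |⟪x, φ i⟫ - b i| ≤ c i := by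
  classical
  let T : F →L[ℝ] ι → ℝ := ContinuousLinearMap.pi fun i => innerSL ℝ (φ i)
  let box : Set (ι → ℝ) := Set.univ.pi fun i => Metric.closedBall (b i) (c i)
  suffices (T '' Metric.closedBall 0 1 ∩ box).Nonempty by
    obtain ⟨_, ⟨x, hx, rfl⟩, hbox⟩ := this
    refine ⟨x, mem_closedBall_zero_iff.1 hx, fun i => ?_⟩
    simpa [T, real_inner_comm, Real.dist_eq] using hbox i (Set.mem_univ i)
  by_contra hdisj
  rw [Set.not_nonempty_iff_eq_empty, ← Set.disjoint_iff_inter_eq_empty] at hdisj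
  obtain ⟨g, s, t, hg_ball, hst, hg_box⟩ := geometric_hahn_banach_compact_closed
    ((convex_closedBall 0 1).linear_image T.toLinearMap)
    ((isCompact_closedBall 0 1).image T.continuous)
    (convex_pi fun i _ => convex_closedBall (b i) (c i))
    (isClosed_set_pi fun i _ => Metric.isClosed_closedBall) hdisj
  set μ : ι → ℝ := fun i => g fun j => if i = j then 1 else 0
  have hg (y : ι → ℝ) : g y = ∑ i, μ i * y i := by
    rw [← ContinuousLinearMap.coe_coe, LinearMap.pi_apply_eq_sum_univ]
    simp only [smul_eq_mul, mul_comm, ContinuousLinearMap.coe_coe, μ]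
  set w := ∑ i, μ i • φ i
  have hgT (x : F) : g (T x) = ⟪w, x⟫ := by
    simp [hg, T, w, sum_inner, real_inner_smul_left]
  have hw : ‖w‖ < s := by
    have hmem : ‖w‖⁻¹ • w ∈ Metric.closedBall (0 : F) 1 := by
      rw [mem_closedBall_zero_iff, norm_smul, norm_inv, norm_norm]
      exact inv_mul_le_one_of_le₀ le_rfl (norm_nonneg _)
    have := hg_ball (T (‖w‖⁻¹ • w)) ⟨_, hmem, rfl⟩
    rwa [hgT, real_inner_smul_right, real_inner_self_eq_norm_mul_norm, inv_mul_eq_div,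
      mul_self_div_self] at this
  -- `g` attains its minimum on the box at the corner `b - c • sign μ`
  have hcorner : t < ∑ i, μ i * b i - ∑ i, c i * |μ i| := by
    have hmem : (fun i => b i - c i * SignType.sign (μ i)) ∈ box := fun i _ => by
      rw [Metric.mem_closedBall, Real.dist_eq, sub_sub_cancel_left, abs_neg, abs_mul,
        abs_of_nonneg (hc i)]
      exact mul_le_of_le_one_right (hc i) (by rcases SignType.sign (μ i) with _ | _ | _ <;> simp)
    calc t < g _ := hg_box _ hmem
      _ = _ := by
        simp only [hg, mul_sub, Finset.sum_sub_distrib, mul_left_comm (μ _) (c _), self_mul_sign]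
  linarith [h μ]

end

theorem exists_good_vector_general {n m : ℕ} (ε : ℝ) (hε : 0 < ε)
    (X : Set (EuclideanSpace ℝ (Fin n))) (hXfin : X.Finite) (h0X : (0 : EuclideanSpace ℝ (Fin n)) ∈ X)
    (f : EuclideanSpace ℝ (Fin n) → EuclideanSpace ℝ (Fin m)) (hf0 : f 0 = 0)
    (hf : ∀ v ∈ X, ∀ w ∈ X,
      ‖v - w‖ ^ 2 ≤ ‖f v - f w‖ ^ 2 ∧ ‖f v - f w‖ ^ 2 ≤ (1 + 3 * ε) * ‖v - w‖ ^ 2)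
    (u : EuclideanSpace ℝ (Fin n)) (hu : ‖u‖ ≤ 1) :
    ∃ u' : EuclideanSpace ℝ (Fin m), ‖u'‖ ≤ 1 ∧
      ∀ v ∈ X, |⟪u', f v⟫ - ⟪u, v⟫| ≤ 3 * Real.sqrt ε * (‖v‖ ^ 2 + 1) := by
  have := hXfin.fintype
  have hnorm (v : X) : ‖(v : EuclideanSpace ℝ (Fin n))‖ ^ 2 ≤ ‖f v‖ ^ 2 ∧
      ‖f v‖ ^ 2 ≤ (1 + 3 * ε) * ‖(v : EuclideanSpace ℝ (Fin n))‖ ^ 2 := by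
    simpa [hf0] using hf v v.2 0 h0X
  have hinner (v w : X) : |⟪f v, f w⟫ - ⟪(v : EuclideanSpace ℝ (Fin n)), w⟫| ≤
      3 * ε * (‖(v : EuclideanSpace ℝ (Fin n))‖ ^ 2 + ‖(w : EuclideanSpace ℝ (Fin n))‖ ^ 2) :=
    abs_inner_sub_inner_le_of_norm_sq_le (by positivity) (hnorm v) (hnorm w) (hf v v.2 w w.2)
  obtain ⟨u', hu', hu'X⟩ := exists_norm_le_one_forall_abs_inner_sub_le (fun v : X => f v)
    (fun v => ⟪u, v⟫) (fun v => √(3 * ε) * (‖(v : EuclideanSpace ℝ (Fin n))‖ ^ 2 + 1))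
    (fun v => by positivity)
    (sum_mul_inner_le_of_abs_inner_sub_inner_le (by positivity) _ _ hinner hu)
  refine ⟨u', hu', fun v hv => (hu'X ⟨v, hv⟩).trans ?_⟩
  gcongr
  rw [Real.sqrt_mul (by norm_num)]
  gcongr
  exact (Real.sqrt_le_left (by norm_num)).2 (by norm_num)

/-- **Key lemma for one-point extensions.** Let `ε ∈ (0,1)`, `X ⊂ ℝⁿ` finite with `0 ∈ X`, and
`f : X → ℝᵐ` with `f 0 = 0` and `‖v - w‖² ≤ ‖f v - f w‖² ≤ (1 + 3ε)‖v - w‖²` on `X`. Let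
`u ∈ ℝⁿ`, `‖u‖ ≤ 1`. Then there is `u' ∈ ℝᵐ` with `‖u'‖ ≤ 1` and
`|⟪u', f v⟫ - ⟪u, v⟫| ≤ 3√ε (‖v‖² + 1)` for all `v ∈ X`. -/
theorem exists_good_vector {n m : ℕ} (ε : ℝ) (hε : 0 < ε) (hε1 : ε < 1)
    (X : Set (EuclideanSpace ℝ (Fin n))) (hXfin : X.Finite) (h0X : (0 : EuclideanSpace ℝ (Fin n)) ∈ X)
    (f : EuclideanSpace ℝ (Fin n) → EuclideanSpace ℝ (Fin m)) (hf0 : f 0 = 0)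
    (hf : ∀ v ∈ X, ∀ w ∈ X,
      ‖v - w‖ ^ 2 ≤ ‖f v - f w‖ ^ 2 ∧ ‖f v - f w‖ ^ 2 ≤ (1 + 3 * ε) * ‖v - w‖ ^ 2)
    (u : EuclideanSpace ℝ (Fin n)) (hu : ‖u‖ ≤ 1) :
    ∃ u' : EuclideanSpace ℝ (Fin m), ‖u'‖ ≤ 1 ∧
      ∀ v ∈ X, |⟪u', f v⟫ - ⟪u, v⟫| ≤ 3 * Real.sqrt ε * (‖v‖ ^ 2 + 1) :=
  exists_good_vector_general ε hε X hXfin h0X f hf0 hf u hu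
end

section
/- There exists ε₀ > 0 such that for every ε ∈ (0, ε₀) the following holds. Let x₁ < x₂ < … < x_n be real numbers and let f : {x₁,…,x_n} → ℝ be injective with (1 − ε)|x_i − x_j| ≤ |f(x_i) − f(x_j)| ≤ (1 + ε)|x_i − x_j| for all i, j. Then there do NOT exist indices i < j < k < l with f(x_k) < f(x_i) < f(x_l) < f(x_j), and there do NOT exist indices i < j < k < l with f(x_j) < f(x_l) < f(x_i) < f(x_k). (Equivalently, the permutation π_f ∈ S_n recording the order of the images contains neither (3 1 4 2) nor (2 4 1 3) as a sub-permutation.) -/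
/-!
In a pattern `3142` at `xᵢ < xⱼ < xₖ < xₗ`, the gap `f xⱼ - f xₖ` is close to `xₖ - xⱼ`, yet it
equals `(f xⱼ - f xᵢ) + (f xᵢ - f xₖ)`, which is close to `(xⱼ - xᵢ) + (xₖ - xᵢ)`; hence `xⱼ - xᵢ`
is at most `ε / (1 - ε)` times `xₖ - xⱼ`. On the other hand `f xₗ` lies between `f xᵢ` and `f xⱼ`,
so `xₖ - xⱼ < xₗ - xⱼ` is at most about `xⱼ - xᵢ`. The two estimates clash as soon as `ε ≤ 1/3`.
The pattern `2413` of `f` is the pattern `3142` of `-f`.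
-/

def IsNearIsometry {ι : Type*} (ε : ℝ) (x y : ι → ℝ) : Prop :=
  ∀ i j, (1 - ε) * |x i - x j| ≤ |y i - y j| ∧ |y i - y j| ≤ (1 + ε) * |x i - x j|

namespace IsNearIsometry

variable {ι : Type*} {ε : ℝ} {x y : ι → ℝ}

lemma neg (h : IsNearIsometry ε x y) : IsNearIsometry ε x (-y) := fun i j => by
  simpa only [Pi.neg_apply, neg_sub_neg, abs_sub_comm (y j)] using h i j

lemma le_sub (h : IsNearIsometry ε x y) {i j : ι} (hx : x i ≤ x j) (hy : y i ≤ y j) :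
    (1 - ε) * (x j - x i) ≤ y j - y i := by
  simpa only [abs_of_nonneg (sub_nonneg.2 hx), abs_of_nonneg (sub_nonneg.2 hy)] using (h j i).1

lemma abs_sub_le (h : IsNearIsometry ε x y) {i j : ι} (hx : x i ≤ x j) :
    |y j - y i| ≤ (1 + ε) * (x j - x i) := by
  simpa only [abs_of_nonneg (sub_nonneg.2 hx)] using (h j i).2

lemma not_pattern_3142 [Preorder ι] (h : IsNearIsometry ε x y) (hε : ε ≤ 1 / 3)
    (hx : StrictMono x) {i j k l : ι} (hij : i < j) (hjk : j < k) (hkl : k < l)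
    (hki : y k < y i) (hil : y i < y l) (hlj : y l < y j) : False := by
  have hp : 0 < x j - x i := sub_pos.2 (hx hij)
  have hq : 0 < x k - x j := sub_pos.2 (hx hjk)
  have hij_low := h.le_sub (hx hij).le (hil.trans hlj).le
  have hij_up := (le_abs_self _).trans (h.abs_sub_le (hx hij).le)
  have hik_low := h.neg.le_sub (hx (hij.trans hjk)).le (neg_le_neg hki.le)
  have hjk_up :=
    (le_abs_self (y j - y k)).trans ((abs_sub_comm _ _).trans_le (h.abs_sub_le (hx hjk).le))
  have hjl_low := h.neg.le_sub (hx (hjk.trans hkl)).le (neg_le_neg hlj.le)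
  simp only [Pi.neg_apply, neg_sub_neg] at hik_low hjl_low
  have hsmall : (1 - ε) * (x j - x i) ≤ ε * (x k - x j) := by linarith
  have hlarge : (1 - ε) * (x k - x j) < (1 + ε) * (x j - x i) :=
    calc (1 - ε) * (x k - x j) ≤ (1 - ε) * (x l - x j) :=
        mul_le_mul_of_nonneg_left (by linarith [hx hkl]) (by linarith)
      _ ≤ y j - y l := hjl_low
      _ < y j - y i := by linarith
      _ ≤ (1 + ε) * (x j - x i) := hij_up
  have hε0 : 0 < ε := pos_of_mul_pos_left ((mul_pos (by linarith) hp).trans_le hsmall) hq.le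
  -- With `p = xⱼ - xᵢ`, `q = xₖ - xⱼ`: `(1 - ε)² q < (1 - ε)(1 + ε) p ≤ (1 + ε) ε q`, so `(1 - 3ε) q < 0`.
  linarith [mul_le_mul_of_nonneg_left hsmall (by linarith : (0 : ℝ) ≤ 1 + ε),
    mul_lt_mul_of_pos_left hlarge (by linarith : (0 : ℝ) < 1 - ε),
    mul_nonneg (by linarith : (0 : ℝ) ≤ 1 - 3 * ε) hq.le]

end IsNearIsometry

/-- **Forbidden patterns for near-isometric maps of the line.** For all sufficiently small
`ε > 0`, if `x₁ < ⋯ < xₙ` and `f` satisfies `(1-ε)|xᵢ-xⱼ| ≤ |f xᵢ - f xⱼ| ≤ (1+ε)|xᵢ-xⱼ|`,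
then the order pattern of the images contains neither `(3 1 4 2)` nor `(2 4 1 3)`:
there are no `i < j < k < l` with `f xₖ < f xᵢ < f xₗ < f xⱼ`, and none with
`f xⱼ < f xₗ < f xᵢ < f xₖ`. -/
theorem no_bad_subpermutation :
    ∃ ε₀ > (0 : ℝ), ∀ ε : ℝ, 0 < ε → ε < ε₀ →
      ∀ (n : ℕ) (x : Fin n → ℝ), StrictMono x → ∀ f : ℝ → ℝ,
        (∀ i j : Fin n,
          (1 - ε) * |x i - x j| ≤ |f (x i) - f (x j)| ∧
          |f (x i) - f (x j)| ≤ (1 + ε) * |x i - x j|) →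
        (¬ ∃ i j k l : Fin n, i < j ∧ j < k ∧ k < l ∧
            f (x k) < f (x i) ∧ f (x i) < f (x l) ∧ f (x l) < f (x j)) ∧
        (¬ ∃ i j k l : Fin n, i < j ∧ j < k ∧ k < l ∧
            f (x j) < f (x l) ∧ f (x l) < f (x i) ∧ f (x i) < f (x k)) := by
  refine ⟨1 / 3, by norm_num, fun ε _ hε n x hx f hf => ⟨?_, ?_⟩⟩
  all_goals
    have hf : IsNearIsometry ε x (fun i => f (x i)) := hf
    rintro ⟨i, j, k, l, hij, hjk, hkl, h₁, h₂, h₃⟩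
  · exact hf.not_pattern_3142 hε.le hx hij hjk hkl h₁ h₂ h₃
  · exact hf.neg.not_pattern_3142 hε.le hx hij hjk hkl (neg_lt_neg h₃) (neg_lt_neg h₂)
      (neg_lt_neg h₁)
end

section
/- Let ε ∈ (0, 1), let X ⊂ ℝ, and let f : X → ℝ satisfy (1 − ε)|x − y| ≤ |f(x) − f(y)| ≤ (1 + ε)|x − y| for all x, y ∈ X. Suppose p, u, v ∈ X satisfy p < u ≤ v and f(p) < f(v) < f(u). Then v − u ≤ ε·(u − p)/(1 − ε). (Consequently, when ε ≤ 1/2, the 'flipped' pair u, v is separated from p by at least (1 − ε)(v − u)/ε ≥ (v − u)/(2ε).) -/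
/-!
Going from `p` to `u` through `v`, the map must climb from `f p` up to `f v` over the distance
`v - p` and then come back down from `f u` to `f v` over `v - u`; both legs cost at least a factor
`1 - ε` of their length, while the direct rise `f u - f p` is at most `(1 + ε) (u - p)`.
Comparing, `2 (1 - ε) (v - u) ≤ 2 ε (u - p)`.
-/

theorem mul_sub_le_sub_of_mul_abs_le {c x y a b : ℝ} (hc : 0 ≤ c) (h : c * |x - y| ≤ |a - b|)
    (hba : b ≤ a) : c * (x - y) ≤ a - b :=
  calc c * (x - y) ≤ c * |x - y| := mul_le_mul_of_nonneg_left (le_abs_self _) hc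
    _ ≤ |a - b| := h
    _ = a - b := abs_of_nonneg (sub_nonneg.2 hba)

theorem sub_le_mul_sub_of_abs_le_mul_abs {c x y a b : ℝ} (h : |a - b| ≤ c * |x - y|)
    (hyx : y ≤ x) : a - b ≤ c * (x - y) :=
  calc a - b ≤ |a - b| := le_abs_self _
    _ ≤ c * |x - y| := h
    _ = c * (x - y) := by rw [abs_of_nonneg (sub_nonneg.2 hyx)]

theorem flip_separation_general (ε : ℝ) (hε1 : ε < 1) (X : Set ℝ) (f : ℝ → ℝ)
    (hf : ∀ x ∈ X, ∀ y ∈ X,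
      (1 - ε) * |x - y| ≤ |f x - f y| ∧ |f x - f y| ≤ (1 + ε) * |x - y|)
    (p u v : ℝ) (hp : p ∈ X) (hu : u ∈ X) (hv : v ∈ X)
    (hpu : p < u) (h1 : f p < f v) (h2 : f v < f u) :
    v - u ≤ ε * (u - p) / (1 - ε) := by
  have hε : 0 < 1 - ε := sub_pos.2 hε1
  have rise_pu : f u - f p ≤ (1 + ε) * (u - p) :=
    sub_le_mul_sub_of_abs_le_mul_abs (hf u hu p hp).2 hpu.le
  have rise_pv : (1 - ε) * (v - p) ≤ f v - f p :=
    mul_sub_le_sub_of_mul_abs_le hε.le (hf v hv p hp).1 h1.le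
  have drop_uv : (1 - ε) * (v - u) ≤ f u - f v :=
    mul_sub_le_sub_of_mul_abs_le hε.le (by rw [abs_sub_comm (f u)]; exact (hf v hv u hu).1) h2.le
  rw [le_div_iff₀ hε]
  linear_combination (rise_pu + rise_pv + drop_uv) / 2

/-- **Separation of flipped points.** If `f` is a `(1 ± ε)`-near isometry on `X ⊆ ℝ`,
`p, u, v ∈ X` with `p < u ≤ v`, and the pair `u, v` is flipped over `p`
(`f p < f v < f u`), then `v - u ≤ ε (u - p) / (1 - ε)`. -/
theorem flip_separation (ε : ℝ) (hε : 0 < ε) (hε1 : ε < 1) (X : Set ℝ) (f : ℝ → ℝ)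
    (hf : ∀ x ∈ X, ∀ y ∈ X,
      (1 - ε) * |x - y| ≤ |f x - f y| ∧ |f x - f y| ≤ (1 + ε) * |x - y|)
    (p u v : ℝ) (hp : p ∈ X) (hu : u ∈ X) (hv : v ∈ X)
    (hpu : p < u) (huv : u ≤ v) (h1 : f p < f v) (h2 : f v < f u) :
    v - u ≤ ε * (u - p) / (1 - ε) :=
  flip_separation_general ε hε1 X f hf p u v hp hu hv hpu h1 h2
end

section
/- Let ε > 0, let X ⊆ ℝ^n contain 0, and let f : X → ℝ^m satisfy f(0) = 0 and ‖v − w‖² ≤ ‖f(v) − f(w)‖² ≤ (1 + 3ε)‖v − w‖² for all v, w ∈ X. Then for all v, w ∈ X: |⟨v, w⟩ − ⟨f(v), f(w)⟩| ≤ 3ε·(‖v‖² + ‖w‖²). -/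
open scoped RealInnerProductSpace

/-! By polarization, `2 (⟪v, w⟫ - ⟪f v, f w⟫)` is the sum of `‖v‖² - ‖f v‖²`,
`‖w‖² - ‖f w‖²` and `‖f v - f w‖² - ‖v - w‖²`. Since `f 0 = 0`, the two-sided bound on
squared distances applies to `‖v‖²` and `‖w‖²` as well, so the first two terms lie in
`[-3ε‖v‖², 0]` and `[-3ε‖w‖², 0]` and the last in `[0, 3ε‖v - w‖²]`, where
`‖v - w‖² ≤ 2 (‖v‖² + ‖w‖²)`. -/

lemma norm_sub_sq_le_two_mul {E : Type*} [SeminormedAddGroup E] (v w : E) :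
    ‖v - w‖ ^ 2 ≤ 2 * (‖v‖ ^ 2 + ‖w‖ ^ 2) :=
  (pow_le_pow_left₀ (norm_nonneg _) (norm_sub_le v w) 2).trans add_sq_le

section

variable {E F : Type*} [NormedAddCommGroup E] [InnerProductSpace ℝ E]
  [NormedAddCommGroup F] [InnerProductSpace ℝ F]

lemma two_mul_real_inner_sub_real_inner (v w : E) (v' w' : F) :
    2 * (⟪v, w⟫ - ⟪v', w'⟫) =
      (‖v‖ ^ 2 - ‖v'‖ ^ 2) + (‖w‖ ^ 2 - ‖w'‖ ^ 2) + (‖v' - w'‖ ^ 2 - ‖v - w‖ ^ 2) := by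
  rw [norm_sub_sq_real v w, norm_sub_sq_real v' w']
  ring

theorem abs_real_inner_sub_real_inner_le {δ : ℝ} (hδ : 0 ≤ δ) {v w : E} {v' w' : F}
    (hvw : ‖v - w‖ ^ 2 ≤ ‖v' - w'‖ ^ 2 ∧ ‖v' - w'‖ ^ 2 ≤ (1 + δ) * ‖v - w‖ ^ 2)
    (hv : ‖v‖ ^ 2 ≤ ‖v'‖ ^ 2 ∧ ‖v'‖ ^ 2 ≤ (1 + δ) * ‖v‖ ^ 2)
    (hw : ‖w‖ ^ 2 ≤ ‖w'‖ ^ 2 ∧ ‖w'‖ ^ 2 ≤ (1 + δ) * ‖w‖ ^ 2) :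
    |⟪v, w⟫ - ⟪v', w'⟫| ≤ δ * (‖v‖ ^ 2 + ‖w‖ ^ 2) := by
  have hpol := two_mul_real_inner_sub_real_inner v w v' w'
  have hsub : δ * ‖v - w‖ ^ 2 ≤ δ * (2 * (‖v‖ ^ 2 + ‖w‖ ^ 2)) :=
    mul_le_mul_of_nonneg_left (norm_sub_sq_le_two_mul v w) hδ
  have hvδ : 0 ≤ δ * ‖v‖ ^ 2 := by positivity
  have hwδ : 0 ≤ δ * ‖w‖ ^ 2 := by positivity
  rw [abs_le]
  constructor <;> linarith [hvw.1, hvw.2, hv.1, hv.2, hw.1, hw.2]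

end

/-- **Near-isometries approximately preserve inner products.** Let `ε > 0`, let `X ⊆ ℝⁿ`
contain `0`, and let `f : X → ℝᵐ` satisfy `f 0 = 0` and
`‖v - w‖² ≤ ‖f v - f w‖² ≤ (1 + 3ε)‖v - w‖²` on `X`. Then for all `v, w ∈ X`,
`|⟪v, w⟫ - ⟪f v, f w⟫| ≤ 3ε (‖v‖² + ‖w‖²)`. -/
theorem inner_product_approx_preserved {n m : ℕ} (ε : ℝ) (hε : 0 < ε)
    (X : Set (EuclideanSpace ℝ (Fin n))) (h0X : (0 : EuclideanSpace ℝ (Fin n)) ∈ X)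
    (f : EuclideanSpace ℝ (Fin n) → EuclideanSpace ℝ (Fin m)) (hf0 : f 0 = 0)
    (hf : ∀ v ∈ X, ∀ w ∈ X,
      ‖v - w‖ ^ 2 ≤ ‖f v - f w‖ ^ 2 ∧ ‖f v - f w‖ ^ 2 ≤ (1 + 3 * ε) * ‖v - w‖ ^ 2) :
    ∀ v ∈ X, ∀ w ∈ X,
      |⟪v, w⟫ - ⟪f v, f w⟫| ≤ 3 * ε * (‖v‖ ^ 2 + ‖w‖ ^ 2) := by
  have hf_norm : ∀ v ∈ X, ‖v‖ ^ 2 ≤ ‖f v‖ ^ 2 ∧ ‖f v‖ ^ 2 ≤ (1 + 3 * ε) * ‖v‖ ^ 2 := by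
    intro v hv
    simpa only [hf0, sub_zero] using hf v hv 0 h0X
  intro v hv w hw
  exact abs_real_inner_sub_real_inner_le (by positivity) (hf v hv w hw) (hf_norm v hv)
    (hf_norm w hw)
end
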